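/- arXiv:1611.09914 — 7 statements merged into one kernel-verified Lean document; each statement's English description precedes it below -/
import Mathlib

section
/- Let F_q be a finite field, let G be a k×n matrix over F_q, and let i_1, i_2, …, i_t ∈ {1,…,k}. The following are equivalent: (1) there exist pairwise disjoint sets S_1,…,S_t ⊆ {1,…,n} and functions f_ℓ : F_q^{S_ℓ} → F_q such that f_ℓ applied to the restriction of x·G to the coordinates in S_ℓ equals x_{i_ℓ} for every x ∈ F_q^k and every ℓ ∈ {1,…,t} (i.e., the symbols x_{i_1},…,x_{i_t} can be retrieved by t users reading pairwise disjoint sets of coded symbols); (2) there exist t pairwise disjoint sets T_1,…,T_t ⊆ {1,…,n} of column indices of G such that for each ℓ ∈ {1,…,t} some F_q-linear combination of the columns of G indexed by T_ℓ equals the standard basis column vector e_{i_ℓ}^T. -/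
/-- Some `F`-linear combination of the columns of `G` indexed by `T` equals the vector `v`. -/
def ColLinComb {F : Type*} [Field F] {k n : ℕ} (G : Matrix (Fin k) (Fin n) F)
    (T : Finset (Fin n)) (v : Fin k → F) : Prop :=
  ∃ c : Fin n → F, ∑ j ∈ T, c j • G.transpose j = v

/-- Single-user case, forward direction. -/
lemma single_retrieval {F : Type*} [Field F] {k n : ℕ}
    (G : Matrix (Fin k) (Fin n) F) (i : Fin k) (S : Finset (Fin n))
    (f : ({j : Fin n // j ∈ S} → F) → F)
    (hf : ∀ x : Fin k → F, f (fun j => (Matrix.vecMul x G) j.1) = x i) :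
    ColLinComb G S (Pi.single i 1) := by
  classical
  let L : {j : Fin n // j ∈ S} → (Fin k → F) →ₗ[F] F :=
    fun j => (LinearMap.proj j.1 : (Fin n → F) →ₗ[F] F).comp (Matrix.vecMulLinear G)
  let K : (Fin k → F) →ₗ[F] F := LinearMap.proj i
  have hker : ⨅ j, LinearMap.ker (L j) ≤ LinearMap.ker K := by
    intro x hx
    simp only [Submodule.mem_iInf, LinearMap.mem_ker, L, LinearMap.comp_apply,
      Matrix.vecMulLinear_apply, LinearMap.proj_apply] at hx
    have h1 := hf x
    have h2 := hf 0
    have he : (fun j : {j : Fin n // j ∈ S} => (Matrix.vecMul x G) j.1)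
        = (fun j : {j : Fin n // j ∈ S} => (Matrix.vecMul (0 : Fin k → F) G) j.1) := by
      funext j; simp [hx j, Matrix.zero_vecMul]
    rw [he, h2] at h1
    simpa [K] using h1.symm
  have hspan := mem_span_of_iInf_ker_le_ker hker
  obtain ⟨c, hc⟩ := (Submodule.mem_span_range_iff_exists_fun F).1 hspan
  refine ⟨fun j => if h : j ∈ S then c ⟨j, h⟩ else 0, ?_⟩
  funext m
  have := LinearMap.congr_fun hc (Pi.single m 1)
  simp only [LinearMap.coe_sum, Finset.sum_apply, LinearMap.smul_apply, smul_eq_mul,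
    L, K, LinearMap.comp_apply, Matrix.vecMulLinear_apply, LinearMap.proj_apply] at this
  have hK : (Pi.single m (1:F) : Fin k → F) i = (Pi.single i (1:F) : Fin k → F) m := by
    simp [Pi.single_apply, eq_comm]
  rw [hK] at this
  rw [← this]
  rw [Finset.sum_apply, ← Finset.sum_attach S]
  congr 1
  funext j
  simp [Matrix.single_one_vecMul, Matrix.transpose_apply, mul_comm]


/-- **Theorem (Lipmaa–Skachek).**  The symbols `x_{i_1}, …, x_{i_t}` can be retrieved by `t`
users reading pairwise disjoint sets of coded symbols of `x·G` iff there exist `t` pairwise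
disjoint sets of column indices of `G`, each admitting a linear combination of the
corresponding columns equal to the standard basis vector of the queried index. -/
theorem batch_retrieval_iff_disjoint_colComb
    {F : Type*} [Field F] [Fintype F] {k n t : ℕ}
    (G : Matrix (Fin k) (Fin n) F) (idx : Fin t → Fin k) :
    (∃ S : Fin t → Finset (Fin n),
        (∀ ℓ₁ ℓ₂ : Fin t, ℓ₁ ≠ ℓ₂ → Disjoint (S ℓ₁) (S ℓ₂)) ∧
        ∀ ℓ : Fin t, ∃ f : ({j : Fin n // j ∈ S ℓ} → F) → F,
          ∀ x : Fin k → F, f (fun j => (Matrix.vecMul x G) j.1) = x (idx ℓ)) ↔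
    (∃ T : Fin t → Finset (Fin n),
        (∀ ℓ₁ ℓ₂ : Fin t, ℓ₁ ≠ ℓ₂ → Disjoint (T ℓ₁) (T ℓ₂)) ∧
        ∀ ℓ : Fin t, ColLinComb G (T ℓ) (Pi.single (idx ℓ) 1)) := by
  constructor
  · rintro ⟨S, hdisj, hret⟩
    refine ⟨S, hdisj, fun ℓ => ?_⟩
    obtain ⟨f, hf⟩ := hret ℓ
    exact single_retrieval G (idx ℓ) (S ℓ) f hf
  · rintro ⟨T, hdisj, hcomb⟩
    refine ⟨T, hdisj, fun ℓ => ?_⟩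
    obtain ⟨c, hc⟩ := hcomb ℓ
    refine ⟨fun y => ∑ j : {j : Fin n // j ∈ T ℓ}, c j.1 * y j, fun x => ?_⟩
    have : ∀ j : Fin n, Matrix.vecMul x G j = dotProduct x (G.transpose j) := by
      intro j; simp [Matrix.vecMul, dotProduct, Matrix.transpose_apply]
    calc ∑ j : {j : Fin n // j ∈ T ℓ}, c j.1 * Matrix.vecMul x G j.1
        = ∑ j ∈ T ℓ, c j * dotProduct x (G.transpose j) := by
          rw [← Finset.sum_attach (T ℓ)]; simp [this]
      _ = dotProduct x (∑ j ∈ T ℓ, c j • G.transpose j) := by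
          simp only [dotProduct, Finset.sum_apply, Pi.smul_apply, smul_eq_mul,
            Finset.mul_sum, Finset.sum_mul]
          rw [Finset.sum_comm]
          exact Finset.sum_congr rfl fun j _ => Finset.sum_congr rfl fun m _ => by ring
      _ = x (idx ℓ) := by rw [hc]; simp [dotProduct_single]
end

section
/- Let G be a k×n matrix over a finite field F_q with property A_t, i.e., for every i ∈ {1,…,k} there exist t pairwise disjoint sets T_1,…,T_t of column indices of G such that for each j some F_q-linear combination of the columns of G indexed by T_j equals the standard basis column vector e_i. Then for any two distinct vectors x_1, x_2 ∈ F_q^k, the Hamming distance between x_1·G and x_2·G is at least t. In particular, G has rank k and the minimum Hamming distance of the linear code generated by G (as the row space encoding x ↦ x·G) is at least t. -/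
/-- `G` has property `A_t`: for every `i` there exist `t` pairwise disjoint sets of column
indices, each admitting a linear combination of the corresponding columns equal to `e_i`. -/
def PropertyA {F : Type*} [Field F] {k n : ℕ} (G : Matrix (Fin k) (Fin n) F) (t : ℕ) : Prop :=
  ∀ i : Fin k, ∃ T : Fin t → Finset (Fin n),
    (∀ j₁ j₂ : Fin t, j₁ ≠ j₂ → Disjoint (T j₁) (T j₂)) ∧
    ∀ j : Fin t, ColLinComb G (T j) (Pi.single i 1)

/-!
If `e_i = ∑_{l ∈ T} c_l G_l` and `x_i ≠ 0`, then `x_i = ∑_{l ∈ T} c_l (xG)_l`, so the codeword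
`xG` is nonzero somewhere on `T`. Property `A_t` supplies `t` disjoint such sets `T`, hence `t`
distinct nonzero coordinates of `xG`. Distances follow by linearity, and since `t ≥ 1` the
encoding is injective, i.e. `G` has full row rank.
-/

open Function Matrix

theorem Finset.card_le_card_of_pairwise_disjoint_of_forall_exists_mem {ι α : Type*}
    [Fintype ι] {T : ι → Finset α} {s : Finset α} (hT : Pairwise (Disjoint on T))
    (hs : ∀ j, ∃ a ∈ T j, a ∈ s) : Fintype.card ι ≤ s.card := by
  choose f hfT hfs using hs
  have hf : Injective f := fun j₁ j₂ heq ↦ by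
    by_contra hne
    exact Finset.disjoint_left.mp (hT hne) (hfT j₁) (heq ▸ hfT j₂)
  rw [← Finset.card_univ]
  exact Finset.card_le_card_of_injOn f (fun j _ ↦ hfs j) hf.injOn

theorem ColLinComb.exists_mem_vecMul_ne_zero {F : Type*} [Field F] {k n : ℕ}
    {G : Matrix (Fin k) (Fin n) F} {T : Finset (Fin n)} {v : Fin k → F}
    (h : ColLinComb G T v) {x : Fin k → F} (hx : x ⬝ᵥ v ≠ 0) :
    ∃ l ∈ T, (x ᵥ* G) l ≠ 0 := by
  obtain ⟨c, rfl⟩ := h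
  have hxv : x ⬝ᵥ ∑ l ∈ T, c l • Gᵀ l = ∑ l ∈ T, c l * (x ᵥ* G) l := by
    simp only [dotProduct_sum, dotProduct_smul, smul_eq_mul]
    rfl
  by_contra! hzero
  exact hx (hxv.trans (Finset.sum_eq_zero fun l hl ↦ by rw [hzero l hl, mul_zero]))

theorem PropertyA.le_hammingNorm_vecMul {F : Type*} [Field F] [DecidableEq F] {k n t : ℕ}
    {G : Matrix (Fin k) (Fin n) F} (hA : PropertyA G t) {x : Fin k → F} (hx : x ≠ 0) :
    t ≤ hammingNorm (x ᵥ* G) := by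
  obtain ⟨i, hi⟩ := ne_iff.mp hx
  obtain ⟨T, hdisj, hcomb⟩ := hA i
  have hxi : x ⬝ᵥ Pi.single i 1 ≠ 0 := by rwa [dotProduct_single_one]
  simpa [hammingNorm] using
    Finset.card_le_card_of_pairwise_disjoint_of_forall_exists_mem (s := {l | (x ᵥ* G) l ≠ 0})
      hdisj fun j ↦ by simpa using (hcomb j).exists_mem_vecMul_ne_zero hxi

theorem PropertyA.le_hammingDist_vecMul {F : Type*} [Field F] [DecidableEq F] {k n t : ℕ}
    {G : Matrix (Fin k) (Fin n) F} (hA : PropertyA G t) {x₁ x₂ : Fin k → F} (hne : x₁ ≠ x₂) :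
    t ≤ hammingDist (x₁ ᵥ* G) (x₂ ᵥ* G) := by
  rw [hammingDist_eq_hammingNorm, neg_add_eq_sub, ← sub_vecMul]
  exact hA.le_hammingNorm_vecMul (sub_ne_zero.mpr hne.symm)

theorem PropertyA.rank_eq {F : Type*} [Field F] {k n t : ℕ} {G : Matrix (Fin k) (Fin n) F}
    (hA : PropertyA G t) (ht : 1 ≤ t) : G.rank = k := by
  classical
  have hinj : Injective G.vecMul := fun x₁ x₂ (heq : x₁ ᵥ* G = x₂ ᵥ* G) ↦ by
    by_contra hne
    have hdist := hA.le_hammingDist_vecMul hne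
    rw [heq, hammingDist_self] at hdist
    omega
  simpa using (vecMul_injective_iff.mp hinj).rank_matrix

theorem propertyA_hammingDist_ge_general {F : Type*} [Field F] [DecidableEq F] {k n t : ℕ}
    (ht : 1 ≤ t) (G : Matrix (Fin k) (Fin n) F) (hA : PropertyA G t) :
    (∀ x₁ x₂ : Fin k → F, x₁ ≠ x₂ →
        t ≤ hammingDist (Matrix.vecMul x₁ G) (Matrix.vecMul x₂ G)) ∧
    G.rank = k ∧
    (∀ x : Fin k → F, x ≠ 0 → t ≤ hammingNorm (Matrix.vecMul x G)) :=
  ⟨fun _ _ hne ↦ hA.le_hammingDist_vecMul hne, hA.rank_eq ht,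
    fun _ hx ↦ hA.le_hammingNorm_vecMul hx⟩

/-- If `G` has property `A_t` (with `t ≥ 1`), then any two distinct messages are encoded to
words of Hamming distance at least `t`; in particular `G` has rank `k` and the minimum
Hamming distance of the code `{x·G}` is at least `t`. -/
theorem propertyA_hammingDist_ge {F : Type*} [Field F] [Fintype F] [DecidableEq F] {k n t : ℕ}
    (ht : 1 ≤ t) (G : Matrix (Fin k) (Fin n) F) (hA : PropertyA G t) :
    (∀ x₁ x₂ : Fin k → F, x₁ ≠ x₂ →
        t ≤ hammingDist (Matrix.vecMul x₁ G) (Matrix.vecMul x₂ G)) ∧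
    G.rank = k ∧
    (∀ x : Fin k → F, x ≠ 0 → t ≤ hammingNorm (Matrix.vecMul x G)) :=
  propertyA_hammingDist_ge_general ht G hA
end

section
/- Let G be a k×n matrix over a finite field F_q of rank k with property A_t in which the reconstruction sets have size at most r (so for every i ∈ {1,…,k} there exist t pairwise disjoint sets of column indices, each of size at most r, each admitting a linear combination of the corresponding columns of G equal to e_i), and let d be the minimum Hamming distance of the code {x·G : x ∈ F_q^k}. Then n ≥ k + d + (t−1)·(⌈ k/(r·t − t + 1) ⌉ − 1) − 1. -/
/-- `G` has property `A_t` with reconstruction sets of size at most `r`. -/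
def PropertyAWith {F : Type*} [Field F] {k n : ℕ} (G : Matrix (Fin k) (Fin n) F)
    (t r : ℕ) : Prop :=
  ∀ i : Fin k, ∃ T : Fin t → Finset (Fin n),
    (∀ j₁ j₂ : Fin t, j₁ ≠ j₂ → Disjoint (T j₁) (T j₂)) ∧
    ∀ j : Fin t, (T j).card ≤ r ∧ ColLinComb G (T j) (Pi.single i 1)

/-!
Greedy argument. While the columns `S` chosen so far do not span everything, some `e_i` lies
outside their span; add all `t` reconstruction sets of `e_i`. This costs at most `r t` columns,
but `t - 1` of the new columns are redundant: one set already spans `e_i`, and each other set,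
together with `e_i`, spans one of its own new columns. After `m = ⌈k / (r t - t + 1)⌉ - 1` rounds,
`S` has rank at most `m (r t - t + 1) < k` and at least `m (t - 1)` redundant columns. Extending
`S` by independent columns up to rank `k - 1` leaves a nonzero codeword vanishing on `S`, so
`d ≤ n - (k - 1) - m (t - 1)`.
-/

open Function Module Submodule Finset

section SpanOfFamily

variable {K V α : Type*} [Field K] [AddCommGroup V] [Module K V] [DecidableEq α] (v : α → V)

theorem exists_mem_notMem_mem_span_insert {e : V} {S : Finset α} (hS : e ∉ span K (v '' S))
    {T : Finset α} (hT : e ∈ span K (v '' ↑(S ∪ T))) :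
    ∃ x ∈ T, x ∉ S ∧ v x ∈ span K (insert e (v '' ↑(S ∪ T.erase x))) := by
  induction T using Finset.induction_on with
  | empty => simp_all
  | insert a T haT ih =>
    by_cases he : e ∈ span K (v '' ↑(S ∪ T))
    · obtain ⟨x, hxT, hxS, hx⟩ := ih he
      have hsub : S ∪ T.erase x ⊆ S ∪ (insert a T).erase x := by
        gcongr
        exact subset_insert a T
      exact ⟨x, mem_insert_of_mem hxT, hxS,
        span_mono (Set.insert_subset_insert (Set.image_mono (coe_subset.2 hsub))) hx⟩
    · have haS : a ∉ S := fun haS => he (by rwa [union_insert, insert_eq_of_mem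
        (mem_union_left T haS)] at hT)
      rw [union_insert, coe_insert, Set.image_insert_eq] at hT
      refine ⟨a, mem_insert_self a T, haS, ?_⟩
      rw [erase_insert haT]
      exact mem_span_insert_exchange hT he

theorem exists_subset_card_eq_span_image_le_sdiff {ι : Type*} [Fintype ι] (S : Finset α)
    {T : ι → Finset α} (hT : Pairwise (Disjoint on T)) {e : V} (he : e ∉ span K (v '' S))
    (heT : ∀ j, e ∈ span K (v '' T j)) (j₀ : ι) :
    ∃ X ⊆ univ.biUnion T \ S, X.card = Fintype.card ι - 1 ∧
      span K (v '' ↑(S ∪ univ.biUnion T)) ≤ span K (v '' ↑((S ∪ univ.biUnion T) \ X)) := by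
  classical
  set U := S ∪ univ.biUnion T
  have hTU : ∀ j, T j ⊆ U := fun j =>
    (subset_biUnion_of_mem T (mem_univ j)).trans subset_union_right
  choose x hxT hxS hxspan using fun j => exists_mem_notMem_mem_span_insert v he
    (span_mono (Set.image_mono (coe_subset.2 subset_union_right)) (heT j))
  have hx : Injective x := fun j j' h => by
    by_contra hne
    exact disjoint_left.1 (hT hne) (hxT j) (h ▸ hxT j')
  -- `e` is spanned by `T j₀`, and then each `x j` by `e` and the rest of `T j`
  set X := (univ.erase j₀).image x
  have hmemX : ∀ j, ∀ l ∈ T j, l ∈ X → l = x j ∧ j ≠ j₀ := by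
    intro j l hl hlX
    obtain ⟨j', hj', rfl⟩ := mem_image.1 hlX
    obtain rfl : j' = j := by
      by_contra hne
      exact disjoint_left.1 (hT hne) (hxT j') hl
    exact ⟨rfl, ne_of_mem_erase hj'⟩
  have hXS : ∀ l ∈ X, l ∉ S := fun l hlX => by
    obtain ⟨j, -, rfl⟩ := mem_image.1 hlX
    exact hxS j
  have heW : e ∈ span K (v '' ↑(U \ X)) := by
    refine span_mono (Set.image_mono (coe_subset.2 fun l hl => ?_)) (heT j₀)
    exact mem_sdiff.2 ⟨hTU j₀ hl, fun hlX => (hmemX j₀ l hl hlX).2 rfl⟩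
  refine ⟨X, fun l hlX => ?_, ?_, span_le.2 ?_⟩
  · obtain ⟨j, -, rfl⟩ := mem_image.1 hlX
    exact mem_sdiff.2 ⟨subset_biUnion_of_mem T (mem_univ j) (hxT j), hxS j⟩
  · rw [card_image_of_injective _ hx, card_erase_of_mem (mem_univ _), card_univ]
  rintro _ ⟨l, hl, rfl⟩
  by_cases hlX : l ∈ X
  · obtain ⟨j, -, rfl⟩ := mem_image.1 hlX
    refine span_le.2 (Set.insert_subset heW ?_) (hxspan j)
    refine (Set.image_mono (coe_subset.2 fun l hl => ?_)).trans subset_span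
    rcases mem_union.1 hl with hlS | hlT
    · exact mem_sdiff.2 ⟨mem_union_left _ hlS, fun hlX => hXS l hlX hlS⟩
    · exact mem_sdiff.2 ⟨hTU j (mem_of_mem_erase hlT),
        fun hlX => ne_of_mem_erase hlT (hmemX j l (mem_of_mem_erase hlT) hlX).1⟩
  · exact subset_span ⟨l, mem_sdiff.2 ⟨hl, hlX⟩, rfl⟩

variable [FiniteDimensional K V]

theorem finrank_image_le_finrank_image_add_card_sdiff (A B : Finset α) :
    (v '' B).finrank K ≤ (v '' A).finrank K + (B \ A).card := by
  have hsub : v '' B ⊆ v '' A ∪ v '' ↑(B \ A) := by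
    rw [← Set.image_union, coe_sdiff]
    exact Set.image_mono (by simp)
  calc (v '' B).finrank K ≤ finrank K ↥(span K (v '' A) ⊔ span K (v '' ↑(B \ A))) :=
        Submodule.finrank_mono (by rw [← span_union]; exact span_mono hsub)
    _ ≤ (v '' A).finrank K + (v '' ↑(B \ A)).finrank K :=
        finrank_add_le_finrank_add_finrank _ _
    _ ≤ (v '' A).finrank K + (B \ A).card := by
        classical
        gcongr
        rw [← coe_image]
        exact (finrank_span_finset_le_card _).trans card_image_le

theorem finrank_image_insert_of_notMem_span {S : Finset α} {l : α}
    (hl : v l ∉ span K (v '' S)) :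
    (v '' ↑(insert l S)).finrank K = (v '' S).finrank K + 1 := by
  refine le_antisymm ?_ (Nat.succ_le_of_lt ?_)
  · refine (finrank_image_le_finrank_image_add_card_sdiff v S _).trans ?_
    gcongr
    refine (card_le_card fun x => ?_).trans (card_singleton l).le
    simp only [mem_sdiff, mem_insert, mem_singleton]
    tauto
  · refine Submodule.finrank_lt_finrank_of_lt (lt_of_le_of_ne
      (span_mono (Set.image_mono (by simp))) fun h => hl ?_)
    rw [h]
    exact subset_span ⟨l, by simp, rfl⟩

theorem exists_superset_card_eq_finrank_image_eq (p : ℕ) (S : Finset α)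
    (h : (v '' S).finrank K + p ≤ (Set.range v).finrank K) :
    ∃ S' ⊇ S, S'.card = S.card + p ∧ (v '' S').finrank K = (v '' S).finrank K + p := by
  induction p generalizing S with
  | zero => exact ⟨S, subset_rfl, rfl, rfl⟩
  | succ p ih =>
    obtain ⟨l, hl⟩ : ∃ l, v l ∉ span K (v '' S) := by
      by_contra! hall
      have : (Set.range v).finrank K ≤ (v '' S).finrank K :=
        Submodule.finrank_mono (span_le.2 (Set.range_subset_iff.2 hall))
      omega
    have hlS : l ∉ S := fun h => hl (subset_span ⟨l, h, rfl⟩)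
    have hrank := finrank_image_insert_of_notMem_span v hl
    obtain ⟨S', hsub, hcard, hrank'⟩ := ih (insert l S) (by omega)
    exact ⟨S', (subset_insert l S).trans hsub, by rw [hcard, card_insert_of_notMem hlS]; ring,
      by omega⟩

theorem finrank_image_union_biUnion_add_le {ι : Type*} [Fintype ι] (S : Finset α)
    {T : ι → Finset α} (hT : Pairwise (Disjoint on T)) {e : V} (he : e ∉ span K (v '' S))
    (heT : ∀ j, e ∈ span K (v '' T j)) (j₀ : ι) :
    (v '' ↑(S ∪ univ.biUnion T)).finrank K + (Fintype.card ι - 1) + S.card ≤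
      (v '' S).finrank K + (S ∪ univ.biUnion T).card := by
  obtain ⟨X, hXsub, hXcard, hspan⟩ :=
    exists_subset_card_eq_span_image_le_sdiff v S hT he heT j₀
  set U := S ∪ univ.biUnion T
  have hcard : ((U \ X) \ S).card + X.card + S.card = U.card := by
    have hXS : Disjoint X S := disjoint_left.2 fun l hl => (mem_sdiff.1 (hXsub hl)).2
    have hXSU : X ∪ S ⊆ U := union_subset (fun l hl => mem_union_right _ (mem_sdiff.1
      (hXsub hl)).1) subset_union_left
    have := card_le_card hXSU
    rw [card_union_of_disjoint hXS] at this
    rw [sdiff_sdiff_left, sup_eq_union, card_sdiff_of_subset hXSU, card_union_of_disjoint hXS]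
    omega
  calc (v '' U).finrank K + (Fintype.card ι - 1) + S.card
      ≤ (v '' ↑(U \ X)).finrank K + X.card + S.card := by
        rw [hXcard]
        gcongr
        exact Submodule.finrank_mono hspan
    _ ≤ (v '' S).finrank K + ((U \ X) \ S).card + X.card + S.card := by
        gcongr
        exact finrank_image_le_finrank_image_add_card_sdiff v S _
    _ = (v '' S).finrank K + U.card := by omega

end SpanOfFamily

theorem hammingNorm_add_card_le {ι β : Type*} [Fintype ι] [DecidableEq ι] [Zero β]
    [DecidableEq β] (y : ι → β) (S : Finset ι) (hS : ∀ l ∈ S, y l = 0) :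
    hammingNorm y + S.card ≤ Fintype.card ι := by
  have : hammingNorm y ≤ Sᶜ.card :=
    card_le_card fun l hl => mem_compl.2 fun hlS => (mem_filter.1 hl).2 (hS l hlS)
  rw [card_compl] at this
  have := card_le_univ S
  omega

theorem exists_single_one_notMem {K ι : Type*} [Field K] [Fintype ι] [DecidableEq ι]
    {W : Submodule K (ι → K)} (hW : W ≠ ⊤) : ∃ i, Pi.single i 1 ∉ W := by
  by_contra! h
  refine hW (eq_top_iff.2 ?_)
  rw [← (Pi.basisFun K ι).span_eq, span_le]
  rintro _ ⟨i, rfl⟩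
  simpa using h i

section Matrix

open Matrix

variable {F : Type*} [Field F] {k n : ℕ} (G : Matrix (Fin k) (Fin n) F)

variable {G} in
theorem ColLinComb.mem_span {T : Finset (Fin n)} {w : Fin k → F} (h : ColLinComb G T w) :
    w ∈ span F (G.col '' T) := by
  obtain ⟨c, rfl⟩ := h
  exact sum_mem fun l hl => smul_mem _ _ (subset_span ⟨l, hl, rfl⟩)

variable {G} in
theorem PropertyAWith.pos {t r : ℕ} (hA : PropertyAWith G t r) (ht : 0 < t) (hk : 0 < k) :
    0 < r := by
  obtain ⟨T, -, hT⟩ := hA ⟨0, hk⟩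
  obtain ⟨hcard, c, hc⟩ := hT ⟨0, ht⟩
  refine Nat.pos_of_ne_zero fun hr => ?_
  have hT₀ : T ⟨0, ht⟩ = ∅ := card_eq_zero.1 (by omega)
  rw [hT₀, sum_empty] at hc
  simpa using congrFun hc ⟨0, hk⟩

theorem exists_ne_zero_vecMul_eq_zero {S : Set (Fin n)} (hS : span F (G.col '' S) < ⊤) :
    ∃ x ≠ 0, ∀ l ∈ S, (x ᵥ* G) l = 0 := by
  obtain ⟨f, hf, hker⟩ := (span F (G.col '' S)).exists_le_ker_of_lt_top hS
  refine ⟨(dotProductEquiv F (Fin k)).symm f, by simpa using hf, fun l hl => ?_⟩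
  have := hker (subset_span ⟨l, hl, rfl⟩)
  rw [LinearMap.mem_ker, ← (dotProductEquiv F (Fin k)).apply_symm_apply f] at this
  exact this

theorem exists_finset_finrank_add_le_card {t r : ℕ} (hA : PropertyAWith G t r) (ht : 0 < t)
    (m : ℕ) (hm : m * (r * t - t + 1) < k) :
    ∃ S : Finset (Fin n), (G.col '' S).finrank F ≤ m * (r * t - t + 1) ∧
      (G.col '' S).finrank F + m * (t - 1) ≤ S.card := by
  induction m with
  | zero => exact ⟨∅, by simp, by simp⟩
  | succ m ih =>
    rw [add_one_mul] at hm
    obtain ⟨S, hSrank, hSred⟩ := ih (by omega)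
    have hSspan : span F (G.col '' S) ≠ ⊤ := fun h => by
      rw [Set.finrank, h, finrank_top, finrank_fin_fun] at hSrank
      omega
    obtain ⟨i, hi⟩ := exists_single_one_notMem hSspan
    obtain ⟨T, hdisj, hT⟩ := hA i
    have hround := finrank_image_union_biUnion_add_le G.col S (fun j₁ j₂ h => hdisj j₁ j₂ h) hi
      (fun j => (hT j).2.mem_span) ⟨0, ht⟩
    have hcard : (S ∪ univ.biUnion T).card ≤ S.card + r * t :=
      calc _ ≤ S.card + (univ.biUnion T).card := card_union_le _ _
        _ ≤ S.card + ∑ j, (T j).card := by gcongr; exact card_biUnion_le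
        _ ≤ S.card + r * t := by
          gcongr
          simpa [mul_comm] using sum_le_card_nsmul univ _ r fun j _ => (hT j).1
    rw [Fintype.card_fin] at hround
    refine ⟨S ∪ univ.biUnion T, ?_, ?_⟩ <;> rw [add_one_mul] <;> omega

theorem exists_ne_zero_hammingNorm_vecMul_add_card_le [DecidableEq F] (hrank : G.rank = k)
    (S : Finset (Fin n)) (hS : (G.col '' S).finrank F < k) :
    ∃ x ≠ 0, hammingNorm (x ᵥ* G) + S.card + k ≤ n + (G.col '' S).finrank F + 1 := by
  have hcols : (Set.range G.col).finrank F = k := (rank_eq_finrank_span_cols G).symm.trans hrank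
  obtain ⟨S', -, hcard, hrank'⟩ := exists_superset_card_eq_finrank_image_eq (K := F) G.col
    (k - 1 - (G.col '' S).finrank F) S (by omega)
  have hlt : span F (G.col '' S') < ⊤ := lt_top_iff_ne_top.2 fun h => by
    rw [Set.finrank, h, finrank_top, finrank_fin_fun] at hrank'
    omega
  obtain ⟨x, hx, hxS'⟩ := exists_ne_zero_vecMul_eq_zero G hlt
  have := hammingNorm_add_card_le (x ᵥ* G) S' hxS'
  rw [Fintype.card_fin] at this
  exact ⟨x, hx, by omega⟩

end Matrix

theorem ceil_natCast_div_natCast_sub_one {K : Type*} [Field K] [LinearOrder K]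
    [IsStrictOrderedRing K] [FloorRing K] {k s : ℕ} (hk : 0 < k) (hs : 0 < s) :
    ⌈(k : K) / s⌉ - 1 = ((k - 1) / s : ℕ) := by
  have hsK : (0 : K) < s := by exact_mod_cast hs
  rw [sub_eq_iff_eq_add, Int.ceil_eq_iff]
  push_cast
  rw [add_sub_cancel_right, div_le_iff₀ hsK, lt_div_iff₀ hsK]
  constructor
  · exact_mod_cast (Nat.div_mul_le_self (k - 1) s).trans_lt (by omega)
  · have := Nat.lt_div_mul_add (a := k - 1) hs
    exact_mod_cast (show k ≤ ((k - 1) / s + 1) * s by rw [add_one_mul]; omega)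

theorem bound_PIR_restricted_general {F : Type*} [Field F] [DecidableEq F]
    {k n t r d : ℕ} (G : Matrix (Fin k) (Fin n) F)
    (hrank : G.rank = k)
    (hA : PropertyAWith G t r)
    (hd : IsLeast {w : ℕ | ∃ x : Fin k → F, x ≠ 0 ∧ hammingNorm (Matrix.vecMul x G) = w} d) :
    (k : ℤ) + d + ((t : ℤ) - 1) *
        (⌈(k : ℚ) / ((r : ℚ) * t - t + 1)⌉ - 1) - 1 ≤ (n : ℤ) := by
  obtain ⟨⟨x₀, hx₀, rfl⟩, hd⟩ := hd
  have hk : 0 < k := Nat.pos_of_ne_zero (by rintro rfl; exact hx₀ (Subsingleton.elim _ _))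
  rcases Nat.eq_zero_or_pos t with rfl | ht
  · have := hammingNorm_le_card_fintype (x := Matrix.vecMul x₀ G)
    simp only [Fintype.card_fin] at this
    simp only [Nat.cast_zero, mul_zero, sub_self, zero_add, div_one, Int.ceil_natCast]
    omega
  set s := r * t - t + 1
  have hs : (r : ℚ) * t - t + 1 = s := by
    push_cast [s, Nat.cast_sub (Nat.le_mul_of_pos_left t (hA.pos ht hk))]
    ring
  set m := (k - 1) / s
  obtain ⟨S, hSrank, hSred⟩ := exists_finset_finrank_add_le_card G hA ht m
    ((Nat.div_mul_le_self _ _).trans_lt (by omega))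
  obtain ⟨x, hx, hweight⟩ := exists_ne_zero_hammingNorm_vecMul_add_card_le G hrank S
    (hSrank.trans_lt ((Nat.div_mul_le_self _ _).trans_lt (by omega)))
  have := hd ⟨x, hx, rfl⟩
  have hcast : ((t : ℤ) - 1) * m = ((m * (t - 1) : ℕ) : ℤ) := by
    push_cast [Nat.cast_sub ht]
    ring
  rw [hs, ceil_natCast_div_natCast_sub_one hk (by omega), hcast]
  omega

/-- **Singleton-type bound for PIR/batch codes with restricted reconstruction sets
(Zhang–Skachek).**  If `G` has rank `k`, property `A_t` with reconstruction sets of size at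
most `r`, and the code `{x·G}` has minimum distance `d`, then
`n ≥ k + d + (t−1)·(⌈k/(r·t−t+1)⌉ − 1) − 1`. -/
theorem bound_PIR_restricted {F : Type*} [Field F] [Fintype F] [DecidableEq F]
    {k n t r d : ℕ} (G : Matrix (Fin k) (Fin n) F)
    (hrank : G.rank = k)
    (hA : PropertyAWith G t r)
    (hd : IsLeast {w : ℕ | ∃ x : Fin k → F, x ≠ 0 ∧ hammingNorm (Matrix.vecMul x G) = w} d) :
    (k : ℤ) + d + ((t : ℤ) - 1) *
        (⌈(k : ℚ) / ((r : ℚ) * t - t + 1)⌉ - 1) - 1 ≤ (n : ℤ) :=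
  bound_PIR_restricted_general G hrank hA hd
end

section
/- Let G be a k×n generator matrix over F_q of rank k generating an [n,k,t] batch code with reconstruction sets of size at most r, and let d be the minimum Hamming distance of the code {x·G : x ∈ F_q^k}. Then n ≥ k + d + max_{1 ≤ β ≤ t, β ∈ ℕ} { (β−1)·(⌈ k/(r·β − β + 1) ⌉ − 1) } − 1. -/
/-- `G` generates an `[n,k,t]` batch code with reconstruction sets of size at most `r`. -/
def IsBatchCodeWith {F : Type*} [Field F] {k n : ℕ} (G : Matrix (Fin k) (Fin n) F)
    (t r : ℕ) : Prop :=
  ∀ idx : Fin t → Fin k, ∃ T : Fin t → Finset (Fin n),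
    (∀ j₁ j₂ : Fin t, j₁ ≠ j₂ → Disjoint (T j₁) (T j₂)) ∧
    ∀ j : Fin t, (T j).card ≤ r ∧ ColLinComb G (T j) (Pi.single (idx j) 1)

/-! If the columns indexed by `S` span a proper subspace, some unit vector `e_i` lies outside it.
Requesting `e_i` `β` times yields `β` disjoint recovery sets; adding them to `S` costs at most
`βr` new columns but raises the rank by at most `βr - (β - 1)`, because once `e_i` is available
every further recovery set carries a linear relation and so contains a redundant column.
Starting from `S = ∅`, this step can be repeated `s = ⌈k/(rβ - β + 1)⌉ - 1` times while the rank
stays below `k`, leaving a set whose size exceeds its rank by `s(β - 1)`. Padding that set to rank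
`k - 1`, a nonzero codeword vanishing on it has weight at most `n - (k - 1) - s(β - 1)`. -/

open Submodule Module Finset Matrix

section Span

variable {F V ι : Type*} [Field F] [AddCommGroup V] [Module F V] (v : ι → V)

lemma finrank_span_image_le_add_card_sdiff [FiniteDimensional F V] [DecidableEq ι]
    (S R : Finset ι) :
    finrank F (span F (v '' R)) ≤ finrank F (span F (v '' S)) + #(R \ S) := by
  have hle : span F (v '' R) ≤ span F (v '' S) ⊔ span F (v '' ↑(R \ S)) := by
    rw [← span_union, ← Set.image_union]
    exact span_mono (Set.image_mono (by simp))
  calc finrank F (span F (v '' R))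
      ≤ finrank F ↥(span F (v '' S) ⊔ span F (v '' ↑(R \ S))) := finrank_mono hle
    _ ≤ finrank F (span F (v '' S)) + finrank F (span F (v '' ↑(R \ S))) :=
      finrank_add_le_finrank_add_finrank _ _
    _ ≤ finrank F (span F (v '' S)) + #(R \ S) := by
      gcongr
      classical
      rw [← coe_image]
      exact (finrank_span_finset_le_card _).trans card_image_le

lemma exists_mem_sdiff_mem_span_insert_erase [DecidableEq ι] {S T : Finset ι} {u : V}
    (c : ι → F) (hu : ∑ j ∈ T, c j • v j = u) (huS : u ∉ span F (v '' S)) :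
    ∃ a ∈ T \ S, v a ∈ span F (insert u (v '' ↑(T.erase a))) := by
  obtain ⟨a, ha, hca⟩ : ∃ a ∈ T \ S, c a ≠ 0 := by
    by_contra! h
    refine huS (hu ▸ sum_mem fun j hj => ?_)
    by_cases hjS : j ∈ S
    · exact smul_mem _ _ (subset_span (Set.mem_image_of_mem v hjS))
    · simp [h j (mem_sdiff.2 ⟨hj, hjS⟩)]
  refine ⟨a, ha, ?_⟩
  have hca_va : c a • v a = u - ∑ j ∈ T.erase a, c j • v j := by
    rw [← hu, ← add_sum_erase T _ (mem_sdiff.1 ha).1, add_sub_cancel_right]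
  rw [← inv_smul_smul₀ hca (v a), hca_va]
  refine smul_mem _ _ (sub_mem (subset_span (Set.mem_insert u _)) (sum_mem fun j hj => ?_))
  exact smul_mem _ _ (subset_span (Set.mem_insert_of_mem u (Set.mem_image_of_mem v hj)))

lemma finrank_span_image_add_card_le [FiniteDimensional F V] [DecidableEq ι] {S R A : Finset ι}
    (hA : A ⊆ R \ S) (hA_span : ∀ a ∈ A, v a ∈ span F (v '' ↑(R \ A))) :
    finrank F (span F (v '' R)) + #A ≤ finrank F (span F (v '' S)) + #(R \ S) := by
  have hspan_eq : span F (v '' ↑(R \ A)) = span F (v '' R) := by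
    refine le_antisymm (span_mono (Set.image_mono (coe_subset.2 sdiff_subset))) (span_le.2 ?_)
    rintro _ ⟨j, hj, rfl⟩
    by_cases hjA : j ∈ A
    · exact hA_span j hjA
    · exact subset_span (Set.mem_image_of_mem v (mem_sdiff.2 ⟨hj, hjA⟩))
  calc finrank F (span F (v '' R)) + #A
      = finrank F (span F (v '' ↑(R \ A))) + #A := by rw [hspan_eq]
    _ ≤ finrank F (span F (v '' S)) + #((R \ A) \ S) + #A := by
      gcongr; exact finrank_span_image_le_add_card_sdiff v S _
    _ = finrank F (span F (v '' S)) + #(R \ S) := by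
      rw [add_assoc, sdiff_right_comm, card_sdiff_add_card_eq_card hA]

lemma finrank_span_union_biUnion_add_le [FiniteDimensional F V] [DecidableEq ι] {κ : Type*}
    {L : Finset κ} {ℓ₀ : κ} (hℓ₀ : ℓ₀ ∈ L) {T : κ → Finset ι}
    (hT : (L : Set κ).PairwiseDisjoint T) {S : Finset ι} {u : V} (huS : u ∉ span F (v '' S))
    (hu : ∀ ℓ ∈ L, ∃ c : ι → F, ∑ j ∈ T ℓ, c j • v j = u) :
    finrank F (span F (v '' ↑(S ∪ L.biUnion T))) + (#L - 1) ≤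
      finrank F (span F (v '' S)) + #(L.biUnion T \ S) := by
  classical
  -- Every `T ℓ` with `ℓ ≠ ℓ₀` has a column `a ℓ ∉ S` lying in the span of `u` and its other
  -- columns, and `u` itself lies in the span of `T ℓ₀`; so the columns `a ℓ` are redundant.
  choose! c hc using hu
  have hexch (ℓ : κ) (hℓ : ℓ ∈ L) :=
    exists_mem_sdiff_mem_span_insert_erase v (c ℓ) (hc ℓ hℓ) huS
  have : Nonempty ι := ⟨(hexch ℓ₀ hℓ₀).choose⟩
  choose! a ha hspan using hexch
  have ha_eq {ℓ m : κ} (hℓ : ℓ ∈ L) (hm : m ∈ L) (h : a m ∈ T ℓ) : m = ℓ :=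
    hT.elim hm hℓ (not_disjoint_iff.2 ⟨a m, (mem_sdiff.1 (ha m hm)).1, h⟩)
  set A := (L.erase ℓ₀).image a
  set R := S ∪ L.biUnion T
  have hA_card : #A = #L - 1 := by
    rw [card_image_of_injOn, card_erase_of_mem hℓ₀]
    intro ℓ hℓ m hm h
    exact ha_eq (mem_of_mem_erase hm) (mem_of_mem_erase hℓ)
      (h ▸ (mem_sdiff.1 (ha m (mem_of_mem_erase hm))).1)
  have hT_mem {ℓ : κ} (hℓ : ℓ ∈ L) {j : ι} (hj : j ∈ T ℓ) (hjA : j ∈ A) :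
      ℓ ≠ ℓ₀ ∧ j = a ℓ := by
    obtain ⟨m, hm, rfl⟩ := mem_image.1 hjA
    obtain rfl := ha_eq hℓ (mem_of_mem_erase hm) hj
    exact ⟨ne_of_mem_erase hm, rfl⟩
  have hR_mem {ℓ : κ} (hℓ : ℓ ∈ L) {j : ι} (hj : j ∈ T ℓ) (hjA : j ∉ A) :
      v j ∈ span F (v '' ↑(R \ A)) :=
    subset_span (Set.mem_image_of_mem v
      (mem_sdiff.2 ⟨mem_union_right _ (mem_biUnion.2 ⟨ℓ, hℓ, hj⟩), hjA⟩))
  have hu_mem : u ∈ span F (v '' ↑(R \ A)) :=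
    hc ℓ₀ hℓ₀ ▸ sum_smul_mem _ _ fun j hj =>
      hR_mem hℓ₀ hj fun hjA => (hT_mem hℓ₀ hj hjA).1 rfl
  have hA : A ⊆ R \ S := by
    rw [union_sdiff_left]
    simp only [A, image_subset_iff, mem_erase]
    exact fun ℓ hℓ => mem_sdiff.2 ⟨mem_biUnion.2 ⟨ℓ, hℓ.2, (mem_sdiff.1 (ha ℓ hℓ.2)).1⟩,
      (mem_sdiff.1 (ha ℓ hℓ.2)).2⟩
  have key := finrank_span_image_add_card_le v hA fun _ hjA => by
    obtain ⟨ℓ, hℓ, rfl⟩ := mem_image.1 hjA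
    have hℓL := mem_of_mem_erase hℓ
    refine span_le.2 (Set.insert_subset_iff.2 ⟨hu_mem, ?_⟩) (hspan ℓ hℓL)
    rintro _ ⟨j, hj, rfl⟩
    exact hR_mem hℓL (mem_of_mem_erase hj) fun hjA =>
      ne_of_mem_erase hj (hT_mem hℓL (mem_of_mem_erase hj) hjA).2
  rwa [hA_card, union_sdiff_left] at key
end Span

lemma hammingNorm_add_card_le_of_eq_zero {ι M : Type*} [Fintype ι] [Zero M] [DecidableEq M]
    {y : ι → M} {S : Finset ι} (hy : ∀ j ∈ S, y j = 0) :
    hammingNorm y + #S ≤ Fintype.card ι := by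
  classical
  calc hammingNorm y + #S ≤ #Sᶜ + #S := by
        gcongr
        exact card_le_card fun j hj => mem_compl.2 fun hjS => (mem_filter.1 hj).2 (hy j hjS)
    _ = Fintype.card ι := card_compl_add_card S

lemma Matrix.exists_ne_zero_vecMul_eq_zero_on {F m ι : Type*} [Field F] [Fintype m]
    [DecidableEq m] (G : Matrix m ι F) {S : Finset ι} (hS : span F (G.col '' S) ≠ ⊤) :
    ∃ x ≠ 0, ∀ j ∈ S, (x ᵥ* G) j = 0 := by
  obtain ⟨f, hf, hfS⟩ := exists_dual_map_eq_bot_of_lt_top hS.lt_top inferInstance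
  set x : m → F := fun i => f (Pi.basisFun F m i)
  have hf_apply (y : m → F) : f y = y ⬝ᵥ x := by
    conv_lhs => rw [← (Pi.basisFun F m).sum_repr y]
    simp [dotProduct, x]
  refine ⟨x, fun hx => hf (LinearMap.ext fun y => by simp [hf_apply, hx]), fun j hj => ?_⟩
  have : f (G.col j) = 0 := by
    simpa [hfS] using mem_map_of_mem (f := f) (subset_span (R := F) (Set.mem_image_of_mem G.col hj))
  rwa [hf_apply, dotProduct_comm] at this

section BatchCode

variable {F : Type*} [Field F] {k n t r : ℕ} {G : Matrix (Fin k) (Fin n) F}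

/-- For `S = ∅` this is the Singleton bound. -/
lemma singleton_bound_of_finrank_span_col_lt [DecidableEq F] (hrank : G.rank = k) {d : ℕ}
    (hd : ∀ x ≠ 0, d ≤ hammingNorm (x ᵥ* G)) {S : Finset (Fin n)}
    (hS : finrank F (span F (G.col '' S)) < k) :
    d + #S + k ≤ n + finrank F (span F (G.col '' S)) + 1 := by
  have hk : k ≤ finrank F (span F (G.col '' S)) + #(univ \ S) := by
    have := finrank_span_image_le_add_card_sdiff (F := F) G.col S univ
    rwa [coe_univ, Set.image_univ, ← rank_eq_finrank_span_cols, hrank] at this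
  obtain ⟨P, hP, hP_card⟩ :=
    exists_subset_card_eq (s := univ \ S) (n := k - 1 - finrank F (span F (G.col '' S))) (by omega)
  have hSP : finrank F (span F (G.col '' ↑(S ∪ P))) < k := by
    have h₁ := finrank_span_image_le_add_card_sdiff (F := F) G.col S (S ∪ P)
    have h₂ : #((S ∪ P) \ S) ≤ #P := card_le_card (union_sdiff_left S P ▸ sdiff_subset)
    omega
  obtain ⟨x, hx, hxSP⟩ := G.exists_ne_zero_vecMul_eq_zero_on fun h => by
    rw [h, finrank_top, finrank_fin_fun] at hSP
    exact lt_irrefl k hSP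
  have hweight := hammingNorm_add_card_le_of_eq_zero hxSP
  rw [card_union_of_disjoint (disjoint_of_subset_right hP disjoint_sdiff), Fintype.card_fin]
    at hweight
  have := hd x hx
  omega

lemma IsBatchCodeWith.one_le (hB : IsBatchCodeWith G t r) (hk : 0 < k) (ht : 0 < t) : 1 ≤ r := by
  by_contra! hr
  obtain ⟨T, -, hT⟩ := hB fun _ => ⟨0, hk⟩
  obtain ⟨hT_card, c, hc⟩ := hT ⟨0, ht⟩
  rw [show T ⟨0, ht⟩ = ∅ from card_eq_zero.1 (by omega), sum_empty] at hc
  simpa using congrFun hc ⟨0, hk⟩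

lemma IsBatchCodeWith.exists_superset (hB : IsBatchCodeWith G t r) {β : ℕ} (hβ : 1 ≤ β)
    (hβt : β ≤ t) {S : Finset (Fin n)} (hS : finrank F (span F (G.col '' S)) < k) :
    ∃ S' ⊇ S, finrank F (span F (G.col '' S')) + (β - 1) ≤
        finrank F (span F (G.col '' S)) + #(S' \ S) ∧ #(S' \ S) ≤ β * r := by
  obtain ⟨i, hi⟩ : ∃ i, Pi.single i 1 ∉ span F (G.col '' S) := by
    by_contra! h
    have htop : span F (G.col '' S) = ⊤ := by
      rw [eq_top_iff, ← (Pi.basisFun F (Fin k)).span_eq, span_le]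
      rintro _ ⟨i, rfl⟩
      simpa using h i
    rw [htop, finrank_top, finrank_fin_fun] at hS
    exact lt_irrefl k hS
  obtain ⟨T, hT_disj, hT⟩ := hB fun _ => i
  set L : Finset (Fin t) := univ.map (Fin.castLEEmb hβt)
  have hL_card : #L = β := by simp [L]
  refine ⟨S ∪ L.biUnion T, subset_union_left, ?_, ?_⟩
  · have := finrank_span_union_biUnion_add_le G.col (L := L) (ℓ₀ := ⟨0, by omega⟩)
      (mem_map.2 ⟨⟨0, hβ⟩, mem_univ _, rfl⟩) (fun ℓ₁ _ ℓ₂ _ h => hT_disj ℓ₁ ℓ₂ h) hi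
      fun ℓ _ => (hT ℓ).2
    rwa [hL_card, ← union_sdiff_left] at this
  · calc #((S ∪ L.biUnion T) \ S) ≤ #(L.biUnion T) := by
          rw [union_sdiff_left]; exact card_le_card sdiff_subset
      _ ≤ #L * r := card_biUnion_le_card_mul _ _ _ fun ℓ _ => (hT ℓ).1
      _ = β * r := by rw [hL_card]

lemma IsBatchCodeWith.exists_finset_of_mul_lt (hB : IsBatchCodeWith G t r) {β : ℕ} (hβ : 1 ≤ β)
    (hβt : β ≤ t) (s : ℕ) (hs : s * (β * r + 1 - β) < k) :
    ∃ S : Finset (Fin n), finrank F (span F (G.col '' S)) ≤ s * (β * r + 1 - β) ∧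
      finrank F (span F (G.col '' S)) + s * (β - 1) ≤ #S := by
  induction s with
  | zero => exact ⟨∅, by simp⟩
  | succ s ih =>
    simp only [add_one_mul] at hs ⊢
    obtain ⟨S, hS_rank, hS_card⟩ := ih (by omega)
    obtain ⟨S', hSS', hS'_rank, hS'_card⟩ := hB.exists_superset hβ hβt (S := S) (by omega)
    have := card_sdiff_add_card_eq_card hSS'
    clear ih
    generalize β * r = m at *
    refine ⟨S', ?_, ?_⟩ <;> omega

lemma IsBatchCodeWith.add_mul_le [DecidableEq F] (hB : IsBatchCodeWith G t r)
    (hrank : G.rank = k) {d : ℕ} (hd : ∀ x ≠ 0, d ≤ hammingNorm (x ᵥ* G)) {β : ℕ} (hβ : 1 ≤ β)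
    (hβt : β ≤ t) {s : ℕ} (hs : s * (β * r + 1 - β) < k) :
    k + d + s * (β - 1) ≤ n + 1 := by
  obtain ⟨S, hS_rank, hS_card⟩ := hB.exists_finset_of_mul_lt hβ hβt s hs
  have := singleton_bound_of_finrank_span_col_lt hrank hd (hS_rank.trans_lt hs)
  omega

end BatchCode

lemma Int.ceil_natCast_div_le (k : ℕ) {q : ℕ} (hq : 0 < q) :
    ⌈(k : ℚ) / q⌉ ≤ ((k - 1) / q : ℕ) + 1 := by
  rw [Int.ceil_le, div_le_iff₀ (by exact_mod_cast hq)]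
  have := Nat.lt_mul_div_succ (k - 1) hq
  exact_mod_cast (show k ≤ ((k - 1) / q + 1) * q by rw [mul_comm]; omega)

theorem bound_batch_restricted_max_general {F : Type*} [Field F] [DecidableEq F]
    {k n t r d : ℕ} (G : Matrix (Fin k) (Fin n) F)
    (hrank : G.rank = k)
    (hB : IsBatchCodeWith G t r)
    (hd : IsLeast {w : ℕ | ∃ x : Fin k → F, x ≠ 0 ∧ hammingNorm (Matrix.vecMul x G) = w} d) :
    ∀ β : ℕ, 1 ≤ β → β ≤ t →
      (k : ℤ) + d + ((β : ℤ) - 1) *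
          (⌈(k : ℚ) / ((r : ℚ) * β - β + 1)⌉ - 1) - 1 ≤ (n : ℤ) := by
  intro β hβ hβt
  obtain ⟨x₀, hx₀, -⟩ := hd.1
  have hk : 0 < k := Nat.pos_of_ne_zero fun hk => hx₀ (funext fun i => (hk ▸ i).elim0)
  have hβr : β ≤ β * r := Nat.le_mul_of_pos_right β (hB.one_le hk (by omega))
  have hq_cast : (r : ℚ) * β - β + 1 = (β * r + 1 - β : ℕ) := by
    rw [Nat.cast_sub (by omega)]; push_cast; ring
  have hq : 0 < β * r + 1 - β := by omega
  -- `(k - 1) / q = ⌈k / q⌉ - 1` for `q = βr + 1 - β`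
  have hs := (Nat.div_mul_le_self (k - 1) (β * r + 1 - β)).trans_lt (Nat.sub_lt hk one_pos)
  have hmain := hB.add_mul_le hrank (fun x hx => hd.2 ⟨x, hx, rfl⟩) hβ hβt hs
  have hceil := Int.ceil_natCast_div_le k hq
  rw [← hq_cast] at hceil
  generalize (k - 1) / (β * r + 1 - β) = s at hmain hceil
  zify [hβ] at hmain
  nlinarith [mul_le_mul_of_nonneg_left hceil (show (0 : ℤ) ≤ β - 1 by omega)]

/-- **Bound for batch codes with restricted reconstruction sets, maximized over the batch
size (Zhang–Skachek).**  If `G` has rank `k` and generates an `[n,k,t]` batch code with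
reconstruction sets of size at most `r`, and `d` is the minimum distance, then for every
`1 ≤ β ≤ t`, `n ≥ k + d + (β−1)·(⌈k/(r·β−β+1)⌉ − 1) − 1`; that is, `n` is at least the
maximum of the right-hand side over `1 ≤ β ≤ t`. -/
theorem bound_batch_restricted_max {F : Type*} [Field F] [Fintype F] [DecidableEq F]
    {k n t r d : ℕ} (G : Matrix (Fin k) (Fin n) F)
    (hrank : G.rank = k)
    (hB : IsBatchCodeWith G t r)
    (hd : IsLeast {w : ℕ | ∃ x : Fin k → F, x ≠ 0 ∧ hammingNorm (Matrix.vecMul x G) = w} d) :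
    ∀ β : ℕ, 1 ≤ β → β ≤ t →
      (k : ℤ) + d + ((β : ℤ) - 1) *
          (⌈(k : ℚ) / ((r : ℚ) * β - β + 1)⌉ - 1) - 1 ≤ (n : ℤ) :=
  bound_batch_restricted_max_general G hrank hB hd
end

section
/- Let k ≥ 2, let B be the binary k×k matrix whose j-th column equals e_j for 1 ≤ j ≤ k−1 and whose k-th column is the all-ones vector (so that x·B = (x_1, …, x_{k−1}, x_1 + ⋯ + x_k)), and let G = [B | B | B] be the k×3k matrix consisting of three copies of B. Then: (1) viewed as an LRC, G has locality 1 and availability 2 of all symbols, i.e., every column of G appears in three pairwise distinct positions, so each coded symbol can be recovered from either of 2 disjoint single-symbol recovery sets; (2) viewed as a batch or PIR code, any set T of column indices of G for which the sum of the columns of G indexed by T equals the standard basis column vector e_k satisfies |T| ≥ k; hence the size of reconstruction sets for the information symbol x_k is at least k. -/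
/-!
A sum of columns of `G = [B | B | B]` over `T` is `B` applied to the vector counting how many
elements of `T` lie over each column of `B`. The only preimage of `e_k` under `B` is
`(-1, …, -1, 1)` (the last row forces `x_k = 1`, row `j` gives `x_j + x_k = 0`), whose entries
are all nonzero, so `T` meets each of the `k` fibres of `Prod.snd`.
-/

open Matrix Finset

section

variable {ι m n R : Type*} [Fintype n] [DecidableEq n]

theorem sum_transpose_eq_mulVec_card_fiber [NonAssocSemiring R] {B : Matrix m n R}
    {G : Matrix m (ι × n) R} (hG : ∀ i c j, G i (c, j) = B i j) (T : Finset (ι × n)) :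
    ∑ p ∈ T, Gᵀ p = B *ᵥ fun j => (#{p ∈ T | p.2 = j} : R) := by
  funext i
  calc (∑ p ∈ T, Gᵀ p) i = ∑ p ∈ T, B i p.2 := by
        rw [Finset.sum_apply i T (fun p => Gᵀ p)]
        exact sum_congr rfl fun p _ => hG i p.1 p.2
    _ = ∑ j, ∑ p ∈ T with p.2 = j, B i j := (sum_fiberwise' T Prod.snd (B i)).symm
    _ = _ := sum_congr rfl fun j _ => by rw [sum_const, nsmul_eq_mul, Nat.cast_comm]

theorem updateCol_one_mulVec [NonAssocSemiring R] (L : n) (x : n → R) :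
    updateCol (1 : Matrix n n R) L (fun _ => 1) *ᵥ x =
      fun i => if i = L then x L else x i + x L := by
  ext i
  rw [mulVec, dotProduct, ← add_sum_erase _ _ (mem_univ L)]
  have hrest : ∑ j ∈ univ.erase L, updateCol 1 L (fun _ => 1) i j * x j =
      if i = L then 0 else x i := by
    rw [sum_congr rfl fun j hj => by rw [updateCol_ne (ne_of_mem_erase hj), one_apply, ite_mul,
      one_mul, zero_mul], sum_ite_eq]
    simp [ite_not]
  rw [hrest, updateCol_self, one_mul]
  split_ifs <;> simp [add_comm]

theorem eq_of_updateCol_one_mulVec_eq_single [Ring R] {L : n} {x : n → R}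
    (hx : updateCol (1 : Matrix n n R) L (fun _ => 1) *ᵥ x = Pi.single L 1) :
    x = fun j => if j = L then 1 else -1 := by
  rw [updateCol_one_mulVec] at hx
  have hL : x L = 1 := by simpa using congrFun hx L
  ext j
  split_ifs with hj
  · rw [hj, hL]
  · simpa [hj, hL, add_eq_zero_iff_eq_neg] using congrFun hx j

theorem card_le_card_of_sum_transpose_eq_single [Ring R] [Nontrivial R] {L : n}
    {G : Matrix n (ι × n) R} (hG : ∀ i c j, G i (c, j) = updateCol 1 L (fun _ => 1) i j)
    {T : Finset (ι × n)} (hT : ∑ p ∈ T, Gᵀ p = Pi.single L 1) :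
    Fintype.card n ≤ #T := by
  have hcount := eq_of_updateCol_one_mulVec_eq_single
    ((sum_transpose_eq_mulVec_card_fiber hG T).symm.trans hT)
  have hsurj : Set.SurjOn Prod.snd (T : Set (ι × n)) (univ : Finset n) := fun j _ => by
    have hj : (#{p ∈ T | p.2 = j} : R) ≠ 0 := by
      rw [congrFun hcount j]
      split_ifs <;> simp
    obtain ⟨p, hp⟩ := card_ne_zero.1 fun h => hj (by rw [h, Nat.cast_zero])
    exact ⟨p, (mem_filter.1 hp).1, (mem_filter.1 hp).2⟩
  exact card_le_card_of_surjOn Prod.snd hsurj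

end

/-- The triple-replicated code `G = [B | B | B]`, where `B` has columns
`e_1, …, e_{k−1}` and the all-ones column: viewed as an LRC it has locality `1` and
availability `2` of all symbols, but viewed as a batch/PIR code every reconstruction set
for the information symbol `x_k` has size at least `k`. -/
theorem replication_LRC_not_batch (k : ℕ) (hk : 2 ≤ k)
    (B : Matrix (Fin k) (Fin k) (ZMod 2))
    (hB : ∀ i j : Fin k, B i j = if (j : ℕ) < k - 1 then (if i = j then 1 else 0) else 1)
    (G : Matrix (Fin k) (Fin 3 × Fin k) (ZMod 2))
    (hG : ∀ (i : Fin k) (c : Fin 3) (j : Fin k), G i (c, j) = B i j) :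
    -- (1) every column of `G` appears in three pairwise distinct positions, so each coded
    -- symbol has two disjoint single-symbol recovery sets (locality 1, availability 2):
    (∀ p : Fin 3 × Fin k, ∃ p₁ p₂ : Fin 3 × Fin k,
        p₁ ≠ p ∧ p₂ ≠ p ∧ p₁ ≠ p₂ ∧
        (∀ i : Fin k, G i p₁ = G i p) ∧ (∀ i : Fin k, G i p₂ = G i p)) ∧
    -- (2) any set `T` of columns of `G` summing to `e_k` has size at least `k`:
    (∀ T : Finset (Fin 3 × Fin k),
        ∑ p ∈ T, G.transpose p = Pi.single (⟨k - 1, by omega⟩ : Fin k) 1 →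
        k ≤ T.card) := by
  refine ⟨?_, fun T hT => ?_⟩
  · rintro ⟨c, j⟩
    obtain ⟨c₁, c₂, h₁, h₂, h₁₂⟩ : ∃ c₁ c₂ : Fin 3, c₁ ≠ c ∧ c₂ ≠ c ∧ c₁ ≠ c₂ := by
      revert c; decide
    exact ⟨(c₁, j), (c₂, j), by simpa using h₁, by simpa using h₂, by simpa using h₁₂,
      fun i => by rw [hG, hG], fun i => by rw [hG, hG]⟩
  · have hBcol : ∀ i j, B i j = updateCol 1 ⟨k - 1, by omega⟩ (fun _ => 1) i j := by
      intro i j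
      rw [hB, updateCol_apply, one_apply]
      split_ifs <;> simp only [Fin.ext_iff] at * <;> omega
    simpa using card_le_card_of_sum_transpose_eq_single
      (fun i c j => (hG i c j).trans (hBcol i j)) hT
end

section
/- Let κ ≥ 1, k = 2κ, n = 3κ + 1, and let G be the binary k×n matrix in which, for each j ∈ {1,…,κ}, columns 3j−2, 3j−1, 3j equal e_{2j−1}, e_{2j−1}+e_{2j}, e_{2j} respectively, and column n is the all-ones vector. Then: (1) G generates an [n,k,2] batch code with reconstruction sets of size at most 2, i.e., for every pair of (not necessarily distinct) indices i_1, i_2 ∈ {1,…,k} there exist two disjoint sets of column indices, each of size at most 2, whose column sums equal e_{i_1} and e_{i_2} respectively; (2) viewed as an LRC with all-symbols locality, recovering the last coded symbol requires locality at least κ: every set T ⊆ {1,…,n−1} of column indices for which the sum of the columns of G indexed by T equals the all-ones column vector satisfies |T| ≥ κ. -/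
set_option maxHeartbeats 2000000 in
/-- A batch/PIR code with small reconstruction sets need not be an LRC with all-symbols
locality: the block code built from `κ` copies of the `[3,2]` sub-cube code plus an extra
all-ones column is an `[3κ+1, 2κ, 2]` batch code with reconstruction sets of size at most
`2`, yet recovering the last coded symbol requires at least `κ` other symbols. -/
theorem batch_not_LRC (κ : ℕ) (hκ : 1 ≤ κ)
    (G : Matrix (Fin (2 * κ)) (Fin (3 * κ + 1)) (ZMod 2))
    (hG : ∀ (i : Fin (2 * κ)) (c : Fin (3 * κ + 1)),
      G i c =
        if (c : ℕ) < 3 * κ then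
          (if (c : ℕ) % 3 = 0 then (if (i : ℕ) = 2 * ((c : ℕ) / 3) then 1 else 0)
           else if (c : ℕ) % 3 = 1 then
             (if (i : ℕ) = 2 * ((c : ℕ) / 3) ∨ (i : ℕ) = 2 * ((c : ℕ) / 3) + 1
              then 1 else 0)
           else (if (i : ℕ) = 2 * ((c : ℕ) / 3) + 1 then 1 else 0))
        else 1) :
    -- (1) `G` generates an `[n, k, 2]` batch code with reconstruction sets of size ≤ 2:
    (∀ i₁ i₂ : Fin (2 * κ), ∃ T₁ T₂ : Finset (Fin (3 * κ + 1)),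
        Disjoint T₁ T₂ ∧ T₁.card ≤ 2 ∧ T₂.card ≤ 2 ∧
        ∑ j ∈ T₁, G.transpose j = Pi.single i₁ 1 ∧
        ∑ j ∈ T₂, G.transpose j = Pi.single i₂ 1) ∧
    (∀ T : Finset (Fin (3 * κ + 1)), (∀ j ∈ T, (j : ℕ) < 3 * κ) →
        ∑ j ∈ T, G.transpose j = (fun _ => 1) → κ ≤ T.card) := by
  constructor
  · -- Part (1)
    have key : ∀ i : Fin (2 * κ), ∃ c : Fin (3 * κ + 1),
        (c : ℕ) = 3 * ((i : ℕ) / 2) + 2 * ((i : ℕ) % 2) ∧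
        (∑ j ∈ ({c} : Finset (Fin (3 * κ + 1))), G.transpose j = Pi.single i 1) ∧
        ∃ S : Finset (Fin (3 * κ + 1)), Disjoint {c} S ∧ S.card ≤ 2 ∧
          ∑ j ∈ S, G.transpose j = Pi.single i 1 := by
      intro i
      have hi := i.isLt
      obtain ⟨m, hm⟩ : ∃ m, (i : ℕ) = 2 * m ∨ (i : ℕ) = 2 * m + 1 :=
        ⟨(i : ℕ) / 2, by omega⟩
      rcases hm with hm | hm
      · -- even row
        have hmκ : m < κ := by omega
        refine ⟨⟨3 * m, by omega⟩, by show 3 * m = _; omega, ?_, ?_⟩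
        · funext i'
          erw [Finset.sum_apply, Finset.sum_singleton, Matrix.transpose_apply, hG,
            Pi.single_apply]
          simp only [Fin.ext_iff]
          have hi' := i'.isLt
          split_ifs <;> first | rfl | omega
        · have hne : (⟨3 * m + 1, by omega⟩ : Fin (3 * κ + 1)) ≠ ⟨3 * m + 2, by omega⟩ := by
            simp [Fin.ext_iff]
          refine ⟨{⟨3 * m + 1, by omega⟩, ⟨3 * m + 2, by omega⟩}, ?_, ?_, ?_⟩
          · rw [Finset.disjoint_left]
            intro a ha hb
            simp only [Finset.mem_singleton, Finset.mem_insert] at ha hb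
            rcases hb with hb | hb <;> rw [ha] at hb <;>
              exact absurd (congrArg Fin.val hb) (by simp)
          · exact le_trans (Finset.card_insert_le _ _) (by simp)
          · funext i'
            erw [Finset.sum_apply, Finset.sum_pair hne]
            simp only [Matrix.transpose_apply]
            rw [hG, hG, Pi.single_apply]
            simp only [Fin.ext_iff]
            have hi' := i'.isLt
            split_ifs <;> first | rfl | decide | omega
      · -- odd row
        have hmκ : m < κ := by omega
        refine ⟨⟨3 * m + 2, by omega⟩, by show 3 * m + 2 = _; omega, ?_, ?_⟩
        · funext i'
          erw [Finset.sum_apply, Finset.sum_singleton, Matrix.transpose_apply, hG,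
            Pi.single_apply]
          simp only [Fin.ext_iff]
          have hi' := i'.isLt
          split_ifs <;> first | rfl | omega
        · have hne : (⟨3 * m, by omega⟩ : Fin (3 * κ + 1)) ≠ ⟨3 * m + 1, by omega⟩ := by
            simp [Fin.ext_iff]
          refine ⟨{⟨3 * m, by omega⟩, ⟨3 * m + 1, by omega⟩}, ?_, ?_, ?_⟩
          · rw [Finset.disjoint_left]
            intro a ha hb
            simp only [Finset.mem_singleton, Finset.mem_insert] at ha hb
            rcases hb with hb | hb <;> rw [ha] at hb <;>
              exact absurd (congrArg Fin.val hb) (by simp)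
          · exact le_trans (Finset.card_insert_le _ _) (by simp)
          · funext i'
            erw [Finset.sum_apply, Finset.sum_pair hne]
            simp only [Matrix.transpose_apply]
            rw [hG, hG, Pi.single_apply]
            simp only [Fin.ext_iff]
            have hi' := i'.isLt
            split_ifs <;> first | rfl | decide | omega
    intro i₁ i₂
    obtain ⟨c₁, hc₁v, hc₁s, S₁, hd₁, hS₁c, hS₁s⟩ := key i₁
    obtain ⟨c₂, hc₂v, hc₂s, S₂, hd₂, hS₂c, hS₂s⟩ := key i₂
    by_cases h : i₁ = i₂
    · subst h
      exact ⟨{c₁}, S₁, hd₁, by simp, hS₁c, hc₁s, hS₁s⟩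
    · refine ⟨{c₁}, {c₂}, ?_, by simp, by simp, hc₁s, hc₂s⟩
      rw [Finset.disjoint_singleton]
      intro hcc
      apply h
      have hv : (c₁ : ℕ) = (c₂ : ℕ) := congrArg Fin.val hcc
      rw [hc₁v, hc₂v] at hv
      have h1 := i₁.isLt
      have h2 := i₂.isLt
      exact Fin.ext (by omega)
  · -- Part (2)
    intro T hT hsum
    have hmem : ∀ m : ℕ, m < κ → ∃ c ∈ T, (c : ℕ) / 3 = m := by
      intro m hm
      by_contra h
      push_neg at h
      have hrow := congrFun hsum ⟨2 * m, by omega⟩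
      erw [Finset.sum_apply] at hrow
      have hz : ∀ c ∈ T, G.transpose c (⟨2 * m, by omega⟩ : Fin (2 * κ)) = 0 := by
        intro c hc
        have hlt := hT c hc
        have hne := h c hc
        rw [Matrix.transpose_apply, hG]
        show (if (c : ℕ) < 3 * κ then
          (if (c : ℕ) % 3 = 0 then (if 2 * m = 2 * ((c : ℕ) / 3) then 1 else 0)
           else if (c : ℕ) % 3 = 1 then
             (if 2 * m = 2 * ((c : ℕ) / 3) ∨ 2 * m = 2 * ((c : ℕ) / 3) + 1
              then 1 else 0)
           else (if 2 * m = 2 * ((c : ℕ) / 3) + 1 then 1 else 0))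
          else 1) = 0
        split_ifs <;> first | rfl | omega
      rw [Finset.sum_congr rfl hz, Finset.sum_const, smul_zero] at hrow
      exact absurd hrow.symm one_ne_zero
    have hsub : Finset.range κ ⊆ T.image (fun c : Fin (3 * κ + 1) => (c : ℕ) / 3) := by
      intro m hm
      rw [Finset.mem_range] at hm
      obtain ⟨c, hc, hcm⟩ := hmem m hm
      exact Finset.mem_image.mpr ⟨c, hc, hcm⟩
    calc κ = (Finset.range κ).card := (Finset.card_range κ).symm
      _ ≤ (T.image (fun c : Fin (3 * κ + 1) => (c : ℕ) / 3)).card := Finset.card_le_card hsub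
      _ ≤ T.card := Finset.card_image_le
end

section
/- For every even integer k ≥ 2, the systematic binary k×(k + k/2) matrix G = [I_k | A], where the j-th column of A equals e_{2j−1} + e_{2j} for j = 1,…,k/2, generates a [k + k/2, k, 2] batch code with reconstruction sets of size at most 2 whose minimum Hamming distance is d = 2; similarly, for every odd integer k ≥ 1, the systematic binary k×(k + (k+1)/2) matrix G = [I_k | A], where the j-th column of A equals e_{2j−1} + e_{2j} for j = 1,…,(k−1)/2 and the last column of A equals e_k, generates a [k + (k+1)/2, k, 2] batch code with reconstruction sets of size at most 2 and minimum distance d = 2. In both cases n = k + ⌈k/2⌉ = k + d + (t−1)·(⌈ k/(r·t − t − r + 2) ⌉ − 1) − 1 with r = t = 2, so these codes attain the systematic bound n ≥ k + d + max_{2≤β≤t}{(β−1)(⌈k/(rβ−β−r+2)⌉−1)} − 1 with equality. -/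
/-!
Coordinate `i` is read off the systematic column `e_i`, and, disjointly, from the parity column
`e_i + e_p` of its pair together with the systematic column `e_p` of its partner (or from the
parity column `e_i` alone when `k` is odd and `i = k - 1`); this gives the batch property.
Any such batch code has distance at least `2`: if `x i ≠ 0` then `x ⬝ᵥ e_i ≠ 0` is the sum of the
coordinates of `x G` over each of two disjoint reconstruction sets of `e_i`, so each set carries a
nonzero coordinate. Row `0` of the matrix has weight `2`.
-/

/-- The sum of the columns of the binary matrix `G` indexed by `T` equals `v`. -/
def ColSumEq {k n : ℕ} (G : Matrix (Fin k) (Fin n) (ZMod 2))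
    (T : Finset (Fin n)) (v : Fin k → ZMod 2) : Prop :=
  ∑ j ∈ T, G.transpose j = v

/-- `G` generates a binary `[n,k,2]` batch code with reconstruction sets of size ≤ 2. -/
def IsBatch2With2 {k n : ℕ} (G : Matrix (Fin k) (Fin n) (ZMod 2)) : Prop :=
  ∀ i₁ i₂ : Fin k, ∃ T₁ T₂ : Finset (Fin n),
    Disjoint T₁ T₂ ∧ T₁.card ≤ 2 ∧ T₂.card ≤ 2 ∧
    ColSumEq G T₁ (Pi.single i₁ 1) ∧ ColSumEq G T₂ (Pi.single i₂ 1)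

open Finset Matrix

section Batch

variable {k n : ℕ} {G : Matrix (Fin k) (Fin n) (ZMod 2)}

theorem ColSumEq.sum_vecMul {T : Finset (Fin n)} {v : Fin k → ZMod 2} (h : ColSumEq G T v)
    (x : Fin k → ZMod 2) : ∑ j ∈ T, (x ᵥ* G) j = x ⬝ᵥ v := by
  rw [← h]
  exact (dotProduct_sum x T fun j => Gᵀ j).symm

theorem IsBatch2With2.of_systematic (s : Fin k → Fin n) (hs : Function.Injective s)
    (hcol : ∀ i, Gᵀ (s i) = Pi.single i 1)
    (hrepair : ∀ i, ∃ T : Finset (Fin n), s i ∉ T ∧ #T ≤ 2 ∧ ColSumEq G T (Pi.single i 1)) :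
    IsBatch2With2 G := by
  have hsingle : ∀ i, ColSumEq G {s i} (Pi.single i 1) := fun i =>
    (sum_singleton _ _).trans (hcol i)
  intro i₁ i₂
  by_cases h : i₁ = i₂
  · subst h
    obtain ⟨T, hT, hcard, hsum⟩ := hrepair i₁
    exact ⟨{s i₁}, T, disjoint_singleton_left.2 hT, by simp, hcard, hsingle i₁, hsum⟩
  · exact ⟨{s i₁}, {s i₂}, disjoint_singleton.2 (hs.ne h), by simp, by simp,
      hsingle i₁, hsingle i₂⟩

theorem IsBatch2With2.two_le_hammingNorm_vecMul (hG : IsBatch2With2 G)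
    {x : Fin k → ZMod 2} (hx : x ≠ 0) : 2 ≤ hammingNorm (x ᵥ* G) := by
  obtain ⟨i, hi⟩ := Function.ne_iff.mp hx
  obtain ⟨T₁, T₂, hdisj, -, -, h₁, h₂⟩ := hG i i
  have hne : ∀ {T}, ColSumEq G T (Pi.single i 1) → ∃ j ∈ T, (x ᵥ* G) j ≠ 0 := fun h =>
    exists_ne_zero_of_sum_ne_zero (by rwa [h.sum_vecMul, dotProduct_single_one])
  obtain ⟨j₁, hj₁, hx₁⟩ := hne h₁
  obtain ⟨j₂, hj₂, hx₂⟩ := hne h₂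
  calc 2 = #{j₁, j₂} := (card_pair fun h : j₁ = j₂ => disjoint_left.1 hdisj hj₁ (h ▸ hj₂)).symm
    _ ≤ hammingNorm (x ᵥ* G) := card_le_card <| by
      simp [insert_subset_iff, hx₁, hx₂]

theorem IsBatch2With2.isLeast_hammingNorm (hG : IsBatch2With2 G) {x : Fin k → ZMod 2}
    (hx : x ≠ 0) (hw : hammingNorm (x ᵥ* G) ≤ 2) :
    IsLeast {w | ∃ x : Fin k → ZMod 2, x ≠ 0 ∧ hammingNorm (x ᵥ* G) = w} 2 :=
  ⟨⟨x, hx, le_antisymm hw (hG.two_le_hammingNorm_vecMul hx)⟩,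
    by rintro _ ⟨y, hy, rfl⟩; exact hG.two_le_hammingNorm_vecMul hy⟩

end Batch

/-- `[I_k | A]`, where column `m` of `A` is `e_{2m} + e_{2m+1}` (indices from `0`), truncated
to `e_{k-1}` when `2m + 1 = k`: for odd `k` this is the extra column `e_k` of the paper, so both
matrices of the theorem are `pairingMatrix k (k + ⌈k/2⌉)`. Columns beyond `k + ⌈k/2⌉` are zero. -/
def pairingMatrix (k n : ℕ) : Matrix (Fin k) (Fin n) (ZMod 2) :=
  Matrix.of fun i j => if (j : ℕ) < k then (if (i : ℕ) = j then 1 else 0)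
    else (if (i : ℕ) / 2 = j - k then 1 else 0)

section Pairing

variable {k n : ℕ}

theorem pairingMatrix_transpose_castLE (hn : k ≤ n) (i : Fin k) :
    (pairingMatrix k n)ᵀ (Fin.castLE hn i) = Pi.single i 1 := by
  funext r
  simp [pairingMatrix, Pi.single_apply, Fin.ext_iff]

theorem pairingMatrix_transpose_apply_parity {j : Fin n} (hj : k ≤ j) (r : Fin k) :
    (pairingMatrix k n)ᵀ j r = if (r : ℕ) / 2 = j - k then 1 else 0 := by
  simp [pairingMatrix, not_lt.2 hj]

theorem pairingMatrix_exists_repair (hn : k + (k + 1) / 2 ≤ n) (i : Fin k) :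
    ∃ T : Finset (Fin n), Fin.castLE (by omega) i ∉ T ∧ #T ≤ 2 ∧
      ColSumEq (pairingMatrix k n) T (Pi.single i 1) := by
  have hi := i.isLt
  let c : Fin n := ⟨k + i / 2, by omega⟩
  have hc : ∀ r : Fin k, (pairingMatrix k n)ᵀ c r = if (r : ℕ) / 2 = i / 2 then 1 else 0 :=
    fun r => by rw [pairingMatrix_transpose_apply_parity (Nat.le_add_right k _)]; simp [c]
  -- `i + 1 - 2 * (i % 2)` is the other index of the pair `{2 (i / 2), 2 (i / 2) + 1}`; it is
  -- missing exactly when `k` is odd and `i = k - 1`.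
  by_cases hp : (i : ℕ) + 1 - 2 * (i % 2) < k
  · let p : Fin k := ⟨i + 1 - 2 * (i % 2), hp⟩
    refine ⟨{Fin.castLE (by omega) p, c}, ?_, card_le_two, (sum_pair ?_).trans ?_⟩
    · simp only [mem_insert, mem_singleton, Fin.ext_iff, Fin.val_castLE, not_or, p, c]
      omega
    · simp only [Fin.castLE_mk, ne_eq, Fin.ext_iff, p, c]
      omega
    funext r
    rw [Pi.add_apply, pairingMatrix_transpose_castLE, hc]
    simp only [Pi.single_apply, Fin.ext_iff, p]
    have := r.isLt
    split_ifs <;> first | rfl | omega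
  · refine ⟨{c}, ?_, by simp, (sum_singleton _ _).trans ?_⟩
    · simp only [mem_singleton, Fin.ext_iff, Fin.val_castLE, c]
      omega
    funext r
    rw [hc]
    simp only [Pi.single_apply, Fin.ext_iff]
    have := r.isLt
    split_ifs <;> first | rfl | omega

theorem isBatch2With2_pairingMatrix (hn : k + (k + 1) / 2 ≤ n) :
    IsBatch2With2 (pairingMatrix k n) :=
  .of_systematic _ (Fin.castLE_injective _) (pairingMatrix_transpose_castLE _)
    (pairingMatrix_exists_repair hn)

theorem isLeast_hammingNorm_pairingMatrix (hk : 0 < k) (hn : k + (k + 1) / 2 ≤ n) :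
    IsLeast {w | ∃ x : Fin k → ZMod 2, x ≠ 0 ∧ hammingNorm (x ᵥ* pairingMatrix k n) = w} 2 := by
  refine (isBatch2With2_pairingMatrix hn).isLeast_hammingNorm (x := Pi.single ⟨0, hk⟩ 1)
    (by simp) ?_
  rw [single_one_vecMul]
  calc hammingNorm (pairingMatrix k n ⟨0, hk⟩) ≤ #{(⟨0, by omega⟩ : Fin n), ⟨k, by omega⟩} :=
        card_le_card fun j hj => by
          simp only [mem_filter, mem_univ, true_and, pairingMatrix, of_apply] at hj
          simp only [mem_insert, mem_singleton, Fin.ext_iff]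
          split_ifs at hj <;> first | omega | exact (hj rfl).elim
    _ ≤ 2 := card_le_two

end Pairing

/-- **Optimal systematic batch codes with `r = t = 2` (Zhang–Skachek).**
For even `k`, the systematic matrix `[I_k | A]` with columns of `A` equal to
`e_{2j−1}+e_{2j}` generates a `[k + k/2, k, 2]` batch code with reconstruction sets of
size at most `2` and minimum distance `d = 2`; for odd `k`, the analogous matrix with an
extra column `e_k` generates a `[k + (k+1)/2, k, 2]` such code with `d = 2`.  In both
cases `n = k + ⌈k/2⌉ = k + d + (t−1)·(⌈k/(rt−t−r+2)⌉ − 1) − 1` with `r = t = 2`, so the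
systematic bound is attained with equality. -/
theorem optimal_batch_r2_t2 :
    (∀ k : ℕ, 2 ≤ k → k % 2 = 0 →
      ∀ G : Matrix (Fin k) (Fin (k + k / 2)) (ZMod 2),
      (∀ (i : Fin k) (j : Fin (k + k / 2)),
          G i j =
            if (j : ℕ) < k then (if (i : ℕ) = (j : ℕ) then 1 else 0)
            else (if (i : ℕ) = 2 * ((j : ℕ) - k) ∨ (i : ℕ) = 2 * ((j : ℕ) - k) + 1
                  then 1 else 0)) →
      IsBatch2With2 G ∧
      IsLeast {w : ℕ | ∃ x : Fin k → ZMod 2, x ≠ 0 ∧ hammingNorm (Matrix.vecMul x G) = w} 2 ∧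
      k + k / 2 = k + 2 + (2 - 1) * ((k + 1) / 2 - 1) - 1) ∧
    (∀ k : ℕ, 1 ≤ k → k % 2 = 1 →
      ∀ G : Matrix (Fin k) (Fin (k + (k + 1) / 2)) (ZMod 2),
      (∀ (i : Fin k) (j : Fin (k + (k + 1) / 2)),
          G i j =
            if (j : ℕ) < k then (if (i : ℕ) = (j : ℕ) then 1 else 0)
            else if (j : ℕ) < k + (k - 1) / 2 then
              (if (i : ℕ) = 2 * ((j : ℕ) - k) ∨ (i : ℕ) = 2 * ((j : ℕ) - k) + 1
               then 1 else 0)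
            else (if (i : ℕ) = k - 1 then 1 else 0)) →
      IsBatch2With2 G ∧
      IsLeast {w : ℕ | ∃ x : Fin k → ZMod 2, x ≠ 0 ∧ hammingNorm (Matrix.vecMul x G) = w} 2 ∧
      k + (k + 1) / 2 = k + 2 + (2 - 1) * ((k + 1) / 2 - 1) - 1) := by
  refine ⟨fun k hk _ G hG => ?_, fun k hk _ G hG => ?_⟩ <;>
  · obtain rfl : G = pairingMatrix k _ := Matrix.ext fun i j => by
      rw [hG, pairingMatrix, of_apply]
      have := i.isLt; have := j.isLt
      split_ifs <;> first | rfl | omega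
    exact ⟨isBatch2With2_pairingMatrix (by omega),
      isLeast_hammingNorm_pairingMatrix (by omega) (by omega), by omega⟩
end
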